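/- Let n be a positive integer, let γ : ℝⁿ → ℝ be a continuous function with γ(0) = 0 and γ(y) > 0 for every y ≠ 0, and let x : [0,∞) → ℝⁿ be a differentiable function such that: (i) there exists M > 0 with ‖x(t)‖ ≤ M for all t ≥ 0, (ii) there exists M' > 0 with ‖x'(t)‖ ≤ M' for all t ≥ 0, and (iii) the limit as t → ∞ of ∫₀ᵗ γ(x(s)) ds exists and is finite. Then lim_{t→∞} ‖x(t)‖ = 0. -/

import Mathlib

/-!
`γ ∘ x` is uniformly continuous on `[0, ∞)`: `x` is Lipschitz by the derivative bound and
takes values in a closed ball, on which `γ` is uniformly continuous. Barbalat's lemma then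
turns the convergence of `∫₀ᵗ γ (x s) ds` into `γ (x t) → 0`: over a window `[t, t + δ]` the
integral is `δ • γ (x t)` up to the oscillation of `γ ∘ x`, while it tends to `0` because the
integrals from `0` converge. Finally `γ` is bounded below by a positive constant on the closed
ball minus any neighbourhood of `0`, so `x t → 0`.
-/

open Filter MeasureTheory intervalIntegral

open Set Topology

section Barbalat

variable {E : Type*} [NormedAddCommGroup E]

theorem ContinuousOn.intervalIntegrable_of_Ici {g : ℝ → E} {a b c : ℝ}
    (hg : ContinuousOn g (Ici a)) (hb : a ≤ b) (hc : a ≤ c) : IntervalIntegrable g volume b c :=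
  (hg.mono fun _ hs => (le_inf hb hc).trans hs.1).intervalIntegrable

variable [NormedSpace ℝ E]

theorem tendsto_intervalIntegral_self_add_of_tendsto {g : ℝ → E} {a : ℝ} {L : E}
    (hg : ContinuousOn g (Ici a)) (hint : Tendsto (fun t => ∫ s in a..t, g s) atTop (𝓝 L))
    {η : ℝ} (hη : 0 ≤ η) :
    Tendsto (fun t => ∫ s in t..t + η, g s) atTop (𝓝 0) := by
  have hdiff :
      Tendsto (fun t => (∫ s in a..t + η, g s) - ∫ s in a..t, g s) atTop (𝓝 (L - L)) :=
    (hint.comp (tendsto_atTop_add_const_right _ η tendsto_id)).sub hint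
  rw [sub_self] at hdiff
  refine hdiff.congr' ?_
  filter_upwards [eventually_ge_atTop a] with t ht
  exact integral_interval_sub_left (hg.intervalIntegrable_of_Ici le_rfl (by linarith))
    (hg.intervalIntegrable_of_Ici le_rfl ht)

theorem norm_smul_sub_intervalIntegral_le [CompleteSpace E] {g : ℝ → E} {a b C : ℝ}
    (hab : a ≤ b) (hg : IntervalIntegrable g volume a b) (hC : ∀ s ∈ Icc a b, ‖g s - g a‖ ≤ C) :
    ‖(b - a) • g a - ∫ s in a..b, g s‖ ≤ C * (b - a) := by
  have hconst : (b - a) • g a = ∫ _ in a..b, g a := by rw [intervalIntegral.integral_const]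
  rw [hconst, ← integral_sub intervalIntegrable_const hg, ← abs_of_nonneg (sub_nonneg.2 hab)]
  refine norm_integral_le_of_norm_le_const fun s hs => ?_
  rw [norm_sub_rev]
  exact hC s (Ioc_subset_Icc_self (uIoc_of_le hab ▸ hs))

/-- **Barbalat's lemma.** -/
theorem tendsto_zero_of_uniformContinuousOn_of_tendsto_intervalIntegral [CompleteSpace E]
    {g : ℝ → E} {a : ℝ} {L : E} (hg : UniformContinuousOn g (Ici a))
    (hint : Tendsto (fun t => ∫ s in a..t, g s) atTop (𝓝 L)) :
    Tendsto g atTop (𝓝 0) := by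
  rw [Metric.tendsto_nhds]
  intro ε hε
  obtain ⟨δ, hδ, hclose⟩ := Metric.uniformContinuousOn_iff_le.1 hg (ε / 2) (half_pos hε)
  have hwindow := Metric.tendsto_nhds.1
    (tendsto_intervalIntegral_self_add_of_tendsto hg.continuousOn hint hδ.le) (δ * (ε / 2))
    (by positivity)
  filter_upwards [hwindow, eventually_ge_atTop a] with t hsmall ht
  rw [dist_zero_right] at hsmall ⊢
  have hosc : ‖δ • g t - ∫ s in t..t + δ, g s‖ ≤ ε / 2 * δ := by
    simpa using norm_smul_sub_intervalIntegral_le (b := t + δ) (by linarith)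
      (hg.continuousOn.intervalIntegrable_of_Ici ht (by linarith))
      fun s hs => by
        rw [← dist_eq_norm]
        refine hclose s (le_trans ht hs.1) t ht ?_
        rw [Real.dist_eq, abs_of_nonneg (by linarith [hs.1])]
        linarith [hs.2]
  have hδg : δ * ‖g t‖ < δ * ε := by
    calc δ * ‖g t‖ = ‖δ • g t‖ := by rw [norm_smul, Real.norm_of_nonneg hδ.le]
      _ ≤ ‖∫ s in t..t + δ, g s‖ + ‖δ • g t - ∫ s in t..t + δ, g s‖ :=
        norm_le_norm_add_norm_sub' _ _
      _ < δ * ε := by linarith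
  exact lt_of_mul_lt_mul_left hδg hδ.le

end Barbalat

theorem tendsto_of_tendsto_comp_zero_of_isCompact {X α : Type*} [TopologicalSpace X]
    {γ : X → ℝ} {x₀ : X} {K : Set X} {u : α → X} {l : Filter α} (hγ : Continuous γ)
    (hpos : ∀ y, y ≠ x₀ → 0 < γ y) (hK : IsCompact K) (huK : ∀ᶠ t in l, u t ∈ K)
    (hγu : Tendsto (γ ∘ u) l (𝓝 0)) : Tendsto u l (𝓝 x₀) := by
  refine (nhds_basis_opens x₀).tendsto_right_iff.2 fun U ⟨hx₀U, hU⟩ => ?_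
  obtain ⟨δ, hδ, hδle⟩ := (hK.diff hU).exists_forall_le' hγ.continuousOn
    fun y hy => hpos y fun h => hy.2 (h ▸ hx₀U)
  filter_upwards [huK, hγu.eventually (gt_mem_nhds hδ)] with t htK htγ
  by_contra htU
  exact (hδle (u t) ⟨htK, htU⟩).not_gt htγ

theorem barbalat_type_lemma_general (n : ℕ)
    (γ : EuclideanSpace ℝ (Fin n) → ℝ) (hγc : Continuous γ)
    (hγpos : ∀ y : EuclideanSpace ℝ (Fin n), y ≠ 0 → 0 < γ y)
    (x x' : ℝ → EuclideanSpace ℝ (Fin n))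
    (hderiv : ∀ t : ℝ, 0 ≤ t → HasDerivAt x (x' t) t)
    (M : ℝ) (hxbd : ∀ t : ℝ, 0 ≤ t → ‖x t‖ ≤ M)
    (M' : ℝ) (hx'bd : ∀ t : ℝ, 0 ≤ t → ‖x' t‖ ≤ M')
    (L : ℝ)
    (hint : Tendsto (fun t : ℝ => ∫ s in (0:ℝ)..t, γ (x s)) atTop (nhds L)) :
    Tendsto (fun t : ℝ => ‖x t‖) atTop (nhds 0) := by
  have hx_lip : LipschitzOnWith M'.toNNReal x (Ici 0) :=
    (convex_Ici 0).lipschitzOnWith_of_nnnorm_hasDerivWithin_le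
      (fun t ht => (hderiv t ht).hasDerivWithinAt) fun t ht => by
        rw [← NNReal.coe_le_coe, coe_nnnorm]
        exact (hx'bd t ht).trans M'.le_coe_toNNReal
  have hx_ball : MapsTo x (Ici 0) (Metric.closedBall 0 M) := fun t ht =>
    mem_closedBall_zero_iff.2 (hxbd t ht)
  have hγx : UniformContinuousOn (γ ∘ x) (Ici 0) :=
    ((isCompact_closedBall 0 M).uniformContinuousOn_of_continuous hγc.continuousOn).comp
      hx_lip.uniformContinuousOn hx_ball
  have hx_zero : Tendsto x atTop (𝓝 0) :=
    tendsto_of_tendsto_comp_zero_of_isCompact hγc hγpos (isCompact_closedBall 0 M)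
      ((eventually_ge_atTop 0).mono hx_ball)
      (tendsto_zero_of_uniformContinuousOn_of_tendsto_intervalIntegral hγx hint)
  simpa using hx_zero.norm

/-- **Barbalat-type lemma (Michalska–Mayne).**
Let `γ : ℝⁿ → ℝ` be continuous and positive definite (`γ(0) = 0`, `γ(y) > 0`
for `y ≠ 0`) and let `x : [0,∞) → ℝⁿ` be differentiable with `x` and its
derivative uniformly bounded. If `∫₀ᵗ γ(x(s)) ds` converges to a finite limit
as `t → ∞`, then `‖x(t)‖ → 0` as `t → ∞`. -/
theorem barbalat_type_lemma (n : ℕ) (hn : 0 < n)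
    (γ : EuclideanSpace ℝ (Fin n) → ℝ) (hγc : Continuous γ)
    (hγ0 : γ 0 = 0) (hγpos : ∀ y : EuclideanSpace ℝ (Fin n), y ≠ 0 → 0 < γ y)
    (x x' : ℝ → EuclideanSpace ℝ (Fin n))
    (hderiv : ∀ t : ℝ, 0 ≤ t → HasDerivAt x (x' t) t)
    (M : ℝ) (hM : 0 < M) (hxbd : ∀ t : ℝ, 0 ≤ t → ‖x t‖ ≤ M)
    (M' : ℝ) (hM' : 0 < M') (hx'bd : ∀ t : ℝ, 0 ≤ t → ‖x' t‖ ≤ M')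
    (L : ℝ)
    (hint : Tendsto (fun t : ℝ => ∫ s in (0:ℝ)..t, γ (x s)) atTop (nhds L)) :
    Tendsto (fun t : ℝ => ‖x t‖) atTop (nhds 0) :=
  barbalat_type_lemma_general n γ hγc hγpos x x' hderiv M hxbd M' hx'bd L hint
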